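/- The inverse of the n×n matrix R_n with entries C(i-1, n-j) is the matrix with entries (-1)^(n+i+j+1) C(n-i, j-1); i.e., their product is the identity matrix. -/

import Mathlib

/-!
Reading columns backwards, `R_n` is the lower-triangular Pascal matrix `P = (C(i, j))`
(0-based indices), and the proposed inverse is the signed Pascal matrix `((-1)^(i+j) C(i, j))`
read with its rows backwards. The two reversals cancel in the product, leaving `P P⁻¹`, where
the inverse is binomial inversion: `∑ₘ (-1)^(m+j) C(i, m) C(m, j) = C(i, j) ∑ₜ (-1)^t C(i-j, t)`.
-/

/-- `R n` is the `n × n` integer matrix whose 1-based `(i,j)` entry is `C(i-1, n-j)`. -/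
def Rmat (n : ℕ) : Matrix (Fin n) (Fin n) ℤ :=
  Matrix.of fun i j => (Nat.choose i.1 (n - 1 - j.1) : ℤ)

open Finset Matrix

theorem Int.alternating_sum_range_choose_mul_choose (i j : ℕ) :
    ∑ m ∈ Finset.range (i + 1), (i.choose m : ℤ) * ((-1) ^ (m + j) * m.choose j) =
      if i = j then 1 else 0 := by
  obtain hij | hji := lt_or_ge i j
  · rw [if_neg hij.ne]
    refine sum_eq_zero fun m hm => ?_
    rw [Nat.choose_eq_zero_of_lt (by grind : m < j)]
    simp
  obtain ⟨d, rfl⟩ := Nat.exists_eq_add_of_le hji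
  have hterm (t : ℕ) : ((j + d).choose (j + t) : ℤ) * ((-1) ^ (j + t + j) * (j + t).choose j) =
      (j + d).choose j * ((-1) ^ t * d.choose t) := by
    have := Nat.choose_mul (n := j + d) (k := j + t) (s := j) (by omega)
    simp only [Nat.add_sub_cancel_left] at this
    rw [show j + t + j = t + 2 * j by ring, pow_add, pow_mul, neg_one_sq, one_pow, mul_one,
      mul_left_comm, ← Nat.cast_mul, this]
    push_cast
    ring
  rw [show j + d + 1 = j + (d + 1) by ring, sum_range_add,
    sum_eq_zero fun m hm => by rw [Nat.choose_eq_zero_of_lt (mem_range.1 hm)]; simp,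
    zero_add, sum_congr rfl fun t _ => hterm t, ← mul_sum, Int.alternating_sum_range_choose]
  cases d <;> simp

def pascalMatrix (n : ℕ) : Matrix (Fin n) (Fin n) ℤ :=
  of fun i j => (i.1.choose j : ℤ)

def signedPascalMatrix (n : ℕ) : Matrix (Fin n) (Fin n) ℤ :=
  of fun i j => (-1) ^ (i.1 + j.1) * (i.1.choose j : ℤ)

theorem pascalMatrix_mul_signedPascalMatrix (n : ℕ) :
    pascalMatrix n * signedPascalMatrix n = 1 := by
  ext i j
  have hsupp : range (i.1 + 1) ⊆ range n := range_subset_range.2 i.2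
  calc (pascalMatrix n * signedPascalMatrix n) i j
      = ∑ m ∈ range n, (i.1.choose m : ℤ) * ((-1) ^ (m + j) * m.choose j) :=
        Fin.sum_univ_eq_sum_range (fun m => (i.1.choose m : ℤ) * ((-1) ^ (m + j) * m.choose j)) n
    _ = ∑ m ∈ range (i.1 + 1), (i.1.choose m : ℤ) * ((-1) ^ (m + j) * m.choose j) :=
        (sum_subset hsupp fun m _ hm => by
          rw [Nat.choose_eq_zero_of_lt (by simpa using hm)]; simp).symm
    _ = (1 : Matrix (Fin n) (Fin n) ℤ) i j := by
        rw [Int.alternating_sum_range_choose_mul_choose, one_apply]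
        exact if_congr Fin.val_inj rfl rfl

theorem Rmat_eq_submatrix_pascalMatrix (n : ℕ) :
    Rmat n = (pascalMatrix n).submatrix id Fin.revPerm := by
  ext i j
  simp only [Rmat, pascalMatrix, of_apply, submatrix_apply, id, Fin.revPerm_apply, Fin.val_rev]
  rw [show n - 1 - j.1 = n - (j.1 + 1) by omega]

/-- The inverse of `R_n` is the matrix with 1-based `(i,j)` entry
`(-1)^(n+i+j+1) C(n-i, j-1)`: their product is the identity. -/
theorem Rmat_inverse (n : ℕ) :
    Rmat n *
      Matrix.of (fun i j : Fin n =>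
        (-1 : ℤ) ^ (n + i.1 + j.1 + 1) * (Nat.choose (n - 1 - i.1) j.1 : ℤ)) = 1 := by
  have hinv : Matrix.of (fun i j : Fin n =>
      (-1 : ℤ) ^ (n + i.1 + j.1 + 1) * (Nat.choose (n - 1 - i.1) j.1 : ℤ)) =
        (signedPascalMatrix n).submatrix Fin.revPerm id := by
    ext i j
    simp only [signedPascalMatrix, of_apply, submatrix_apply, id, Fin.revPerm_apply, Fin.val_rev]
    rw [show n + i.1 + j.1 + 1 = n - (i.1 + 1) + j.1 + 2 * (i.1 + 1) by omega, pow_add, pow_mul,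
      neg_one_sq, one_pow, mul_one, show n - 1 - i.1 = n - (i.1 + 1) by omega]
  rw [hinv, Rmat_eq_submatrix_pascalMatrix, submatrix_mul_equiv,
    pascalMatrix_mul_signedPascalMatrix, submatrix_id_id]
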